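/- arXiv:2402.07798 — 2 statements merged into one kernel-verified Lean document; each statement's English description precedes it below -/
import Mathlib

section
/- Let n ≥ 2, N = n(n−1), and let u = [u_1, …, u_N] be a subword of λ̂_n with u_1 u_2 ⋯ u_N = e. Then for every j = 0, 1, …, N−1 one has |u_{(j)}(j+1) − u_{(j)}(j)| ≤ n − 1; equivalently, every reflection ((a,b)) occurring in inv(u) can be written with |b − a| ≤ n − 1. -/
/-!
Fix a residue `r` and follow a token through the windows of positions `[j, j + n)`: at time
`j` it marks the position `p` in the window with `u_{(j)}(p) ≡ r (mod n)`. The letter `u_{j+1}`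
moves it by at most one place; when it falls out of the window on the left it re-enters at
position `j + n`, where (by periodicity) the value is larger by `n`. With `z` the number of
earlier times `i` at which the token sat at `i`, and `w` the number of wraps,
`p = r + z + (n - 1) w` and `u_{(j)}(p) = r + n w`. At time `N` we have `u_{(N)} = e`, which
forces `z = w = n - 1`, so `z ≤ n - 1` at all earlier times. For the two tokens at positions
`j` and `j + 1` at time `j`, subtracting the two identities for `p` confines the difference of
their wrap counts to `{-1, 0, 1, 2}`, and a case analysis on it gives the bound.
-/

/-- The affine reflection `((i,j))` of the affine symmetric group `W̃ₙ`, as a function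
`ℤ → ℤ`: it interchanges `i + k*n` and `j + k*n` for every `k ∈ ℤ` and fixes all
integers not congruent to `i` or `j` mod `n`. -/
def affRefl (n : ℕ) (i j : ℤ) : ℤ → ℤ := fun k =>
  if (k - i) % (n : ℤ) = 0 then k - i + j
  else if (k - j) % (n : ℤ) = 0 then k - j + i
  else k

/-- `t : ℤ → ℤ` is an affine reflection of `W̃ₙ`. -/
def IsAffRefl (n : ℕ) (t : ℤ → ℤ) : Prop :=
  ∃ i j : ℤ, (i - j) % (n : ℤ) ≠ 0 ∧ t = affRefl n i j

/-- The simple reflection `sⱼ = ((j, j+1))`. -/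
def simpleRefl (n : ℕ) (j : ℤ) : ℤ → ℤ := affRefl n j (j + 1)

/-- The translation `λₙ`: it sends `k ≡ 0 (mod n)` to `k - n(n-1)` and all other `k`
to `k + n`. -/
def lam (n : ℕ) : ℤ → ℤ := fun k =>
  if k % (n : ℤ) = 0 then k - (n : ℤ) * ((n : ℤ) - 1) else k + (n : ℤ)

/-- The product `r₁ r₂ ⋯ rₘ` of a list of elements, with `(w·v)(k) = w(v(k))`. -/
def listProd (l : List (ℤ → ℤ)) : ℤ → ℤ := l.foldr (· ∘ ·) id

/-- `l` is a factorization of `λₙ` into affine reflections. -/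
def IsFactorization (n : ℕ) (l : List (ℤ → ℤ)) : Prop :=
  (∀ t ∈ l, IsAffRefl n t) ∧ listProd l = lam n

/-- A tree-like factorization of `λₙ`: a factorization `[r₁, …, r_{2n-2}]` into `2n-2`
affine reflections such that there are integers `a₀, …, a_{2n-2}` and `b₁, …, b_{2n-2}`
with `r_k = ((a_{k-1}, b_k))`, `a_{k-1} < b_k` and `a_k ≡ b_k (mod n)`
(0-based: `r` at index `k` equals `((a k, b (k+1)))`). -/
def IsTreeLike (n : ℕ) (l : List (ℤ → ℤ)) : Prop :=
  IsFactorization n l ∧ l.length = 2 * n - 2 ∧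
  ∃ a b : ℕ → ℤ, ∀ k : ℕ, ∀ h : k < l.length,
    l.get ⟨k, h⟩ = affRefl n (a k) (b (k + 1)) ∧
    a k < b (k + 1) ∧ (a (k + 1) - b (k + 1)) % (n : ℤ) = 0

/-- `a₀ < a₁ < ⋯` is a strictly increasing endpoint sequence of the factorization `l`:
`r_ℓ = ((a_{ℓ-1}, a_ℓ))` (0-based: `r` at index `k` is `((a k, a (k+1)))`). -/
def EndSeq (n : ℕ) (l : List (ℤ → ℤ)) (a : ℕ → ℤ) : Prop :=
  ∀ k : ℕ, ∀ h : k < l.length,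
    a k < a (k + 1) ∧ l.get ⟨k, h⟩ = affRefl n (a k) (a (k + 1))

/-- The representative of `x` modulo `n` lying in `{1, …, n}`. -/
def resOne (n : ℕ) (x : ℤ) : ℤ := if x % (n : ℤ) = 0 then (n : ℤ) else x % (n : ℤ)

/-- `nb_k(r)` for the endpoint sequence `a` of a tree-like factorization of `λₙ`:
the list of the residues `a_i mod n` (representatives in `{1, …, n}`), in increasing
order of the index `i ∈ {1, …, 2n-2}`, over those `i` with `a_{i-1} ≡ k (mod n)`
(0-based: indices `i < 2n-2` with `a i ≡ k`, recording the residue of `a (i+1)`). -/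
def nb (n : ℕ) (a : ℕ → ℤ) (k : ℤ) : List ℤ :=
  ((List.range (2 * n - 2)).filter (fun i => decide ((a i - k) % (n : ℤ) = 0))).map
    (fun i => resOne n (a (i + 1)))

/-- A cyclic factorization of `λₙ`: a tree-like factorization such that, for an
endpoint sequence `a` as above, (i) `nb_n` is strictly increasing; and (ii) for each
`k ∈ {1, …, n-1}`, writing `nb_k = [c₁, …, c_ℓ]`, there is `j ∈ {1, …, ℓ}` with
`c_j < c_{j+1} < ⋯ < c_{ℓ-1} < k < c₁ < ⋯ < c_{j-1}`. -/
def IsCyclicFact (n : ℕ) (l : List (ℤ → ℤ)) : Prop :=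
  IsTreeLike n l ∧
  ∃ a : ℕ → ℤ, EndSeq n l a ∧
    List.Chain' (· < ·) (nb n a (n : ℤ)) ∧
    (∀ k : ℤ, 1 ≤ k → k ≤ (n : ℤ) - 1 →
      ∃ m : ℕ, m < (nb n a k).length ∧
        List.Chain' (· < ·)
          ((nb n a k).dropLast.drop m ++ k :: (nb n a k).dropLast.take m))

/-- The letter at (0-based) position `j` of the subword of `λ̂ₙ` with skip set `S`:
the identity `e` if `j` is a skip, and the simple reflection `sⱼ` otherwise. -/
def letterAt (n : ℕ) (S : Finset ℕ) (j : ℕ) : ℤ → ℤ :=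
  if j ∈ S then id else simpleRefl n (j : ℤ)

/-- The subword of the word `λ̂ₙ = [s₀, s₁, …, s_{n-1}]^{n-1}` (of length `N = n(n-1)`,
whose letter at 0-based position `j` is `s_j`) with skip set `S`. -/
def subword (n : ℕ) (S : Finset ℕ) : List (ℤ → ℤ) :=
  (List.range (n * (n - 1))).map (letterAt n S)

/-- `u_{(j)}`: the product of the first `j` letters of the subword. -/
def uPref (n : ℕ) (S : Finset ℕ) (j : ℕ) : ℤ → ℤ :=
  listProd ((subword n S).take j)

/-- `u_{(j)}⁻¹`: since every letter is an involution, the inverse of `u_{(j)}` is the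
product of the first `j` letters in reverse order. -/
def uPrefInv (n : ℕ) (S : Finset ℕ) (j : ℕ) : ℤ → ℤ :=
  listProd (((subword n S).take j).reverse)

/-- The element `t_{j+1} = u_{(j)} s_j u_{(j)}⁻¹` of `inv(u)` (0-based `j`). -/
def conjAt (n : ℕ) (S : Finset ℕ) (j : ℕ) : ℤ → ℤ :=
  uPref n S j ∘ simpleRefl n (j : ℤ) ∘ uPrefInv n S j

/-- The (0-based) skip indices of the subword, in increasing order. -/
def skipIdx (S : Finset ℕ) : List ℕ := S.sort (· ≤ ·)

/-- The sequence `r^u` of skip reflections of the subword with skip set `S`. -/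
def skipRefls (n : ℕ) (S : Finset ℕ) : List (ℤ → ℤ) :=
  (skipIdx S).map (conjAt n S)

/-- The subword with skip set `S` is a member of `S_n`: it is a subword of `λ̂ₙ`
with exactly `2n-2` skips whose product is the identity. -/
def SnMem (n : ℕ) (S : Finset ℕ) : Prop :=
  S ⊆ Finset.range (n * (n - 1)) ∧ S.card = 2 * n - 2 ∧ listProd (subword n S) = id

/-- The product of the suffix `r_{i+1} ⋯ r_m` (0-based: drops the first `i` factors). -/
def suffixProd (l : List (ℤ → ℤ)) (i : ℕ) : ℤ → ℤ := listProd (l.drop i)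

/-- The cyclic segment product `u_{a+1} u_{a+2} ⋯ u_{a+L}` of the subword with skip set
`S` (0-based starting position `a`, indices taken modulo `N = n(n-1)`). -/
def segProd (n : ℕ) (S : Finset ℕ) (a L : ℕ) : ℤ → ℤ :=
  listProd ((List.range L).map (fun t => letterAt n S ((a + t) % (n * (n - 1)))))

open Function

theorem Int.ModEq.eq_of_lt_add {n a b c : ℤ} (h : a ≡ b [ZMOD n])
    (ha : c ≤ a) (ha' : a < c + n) (hb : c ≤ b) (hb' : b < c + n) : a = b := by
  have := Int.eq_zero_of_abs_lt_dvd h.dvd (abs_sub_lt_iff.2 ⟨by omega, by omega⟩)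
  omega

theorem Int.modEq_of_map_modEq {f : ℤ → ℤ} {n a b : ℤ} (hf : Injective f)
    (hper : ∀ k, f (k + n) = f k + n) (h : f a ≡ f b [ZMOD n]) : a ≡ b [ZMOD n] := by
  obtain ⟨q, hq⟩ := h.dvd
  have hshift := AddConstMapClass.map_add_zsmul (⟨f, hper⟩ : AddConstMap ℤ ℤ n n) a q
  simp only [AddConstMap.coe_mk, smul_eq_mul] at hshift
  have hb : a + q * n = b := hf (by rw [hshift]; linear_combination -hq)
  exact Int.modEq_iff_dvd.2 ⟨q, by linear_combination -hb⟩

section AffineReflections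

variable {n : ℕ}

theorem affRefl_add_self (i j k : ℤ) : affRefl n i j (k + n) = affRefl n i j k + n := by
  simp only [affRefl, show ∀ x, k + n - x = k - x + n from fun _ => by ring, Int.add_emod_right]
  split_ifs <;> ring

theorem affRefl_involutive {i j : ℤ} (h : (i - j) % (n : ℤ) ≠ 0) :
    Involutive (affRefl n i j) := by
  rw [Ne, ← Int.dvd_iff_emod_eq_zero] at h
  intro k
  by_cases hi : (n : ℤ) ∣ k - i
  · have hi' : ¬ (n : ℤ) ∣ k - i + j - i := fun h' => h (by
      simpa only [show k - i - (k - i + j - i) = i - j by ring] using dvd_sub hi h')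
    simp [affRefl, hi, hi']
  · by_cases hj : (n : ℤ) ∣ k - j <;> simp [affRefl, hi, hj]

theorem simpleRefl_involutive (hn : n ≠ 1) (j : ℤ) : Involutive (simpleRefl n j) := by
  refine affRefl_involutive fun h => hn ?_
  rw [← Int.dvd_iff_emod_eq_zero, sub_add_cancel_left, Int.dvd_neg] at h
  exact_mod_cast Int.eq_one_of_dvd_one (by positivity) h

theorem simpleRefl_self (j : ℤ) : simpleRefl n j j = j + 1 := by
  simp [simpleRefl, affRefl]

theorem simpleRefl_add_one (hn : n ≠ 1) (j : ℤ) : simpleRefl n j (j + 1) = j := by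
  rw [← simpleRefl_self (n := n) j, simpleRefl_involutive hn]

theorem simpleRefl_of_add_two_le {j k : ℤ} (hk : j + 2 ≤ k) (hk' : k < j + n) :
    simpleRefl n j k = k := by
  have h₁ : (k - j) % (n : ℤ) ≠ 0 := by rw [Int.emod_eq_of_lt] <;> omega
  have h₂ : (k - (j + 1)) % (n : ℤ) ≠ 0 := by rw [Int.emod_eq_of_lt] <;> omega
  simp [simpleRefl, affRefl, h₁, h₂]

end AffineReflections

theorem listProd_append_singleton (l : List (ℤ → ℤ)) (g : ℤ → ℤ) :
    listProd (l ++ [g]) = listProd l ∘ g := by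
  induction l with
  | nil => rfl
  | cons f l ih => exact congrArg (f ∘ ·) ih

theorem listProd_add {l : List (ℤ → ℤ)} {c : ℤ}
    (h : ∀ f ∈ l, ∀ k, f (k + c) = f k + c) (k : ℤ) :
    listProd l (k + c) = listProd l k + c := by
  induction l generalizing k with
  | nil => rfl
  | cons f l ih =>
    simp only [List.forall_mem_cons] at h
    simp only [listProd, List.foldr_cons, comp_apply] at ih ⊢
    rw [ih h.2, h.1]

theorem listProd_injective {l : List (ℤ → ℤ)} (h : ∀ f ∈ l, Injective f) :
    Injective (listProd l) := by
  induction l with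
  | nil => exact injective_id
  | cons f l ih =>
    simp only [List.forall_mem_cons] at h
    exact h.1.comp (ih h.2)

section Subword

variable {n : ℕ} {S : Finset ℕ}

theorem letterAt_add_self (j : ℕ) (k : ℤ) : letterAt n S j (k + n) = letterAt n S j k + n := by
  unfold letterAt
  split_ifs
  · rfl
  · exact affRefl_add_self _ _ k

theorem letterAt_involutive (hn : n ≠ 1) (j : ℕ) : Involutive (letterAt n S j) := by
  unfold letterAt
  split_ifs
  · exact fun _ => rfl
  · exact simpleRefl_involutive hn _

theorem forall_mem_take_subword {P : (ℤ → ℤ) → Prop} (h : ∀ i, P (letterAt n S i))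
    (j : ℕ) : ∀ f ∈ (subword n S).take j, P f := by
  intro f hf
  obtain ⟨i, -, rfl⟩ := List.mem_map.1 (List.mem_of_mem_take hf)
  exact h i

theorem uPref_add_self (j : ℕ) (k : ℤ) : uPref n S j (k + n) = uPref n S j k + n :=
  listProd_add (forall_mem_take_subword letterAt_add_self j) k

theorem uPref_injective (hn : n ≠ 1) (j : ℕ) : Injective (uPref n S j) :=
  listProd_injective (forall_mem_take_subword (fun i => (letterAt_involutive hn i).injective) j)

theorem uPref_succ {j : ℕ} (hj : j < n * (n - 1)) :
    uPref n S (j + 1) = uPref n S j ∘ letterAt n S j := by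
  have hj' : j < (subword n S).length := by simpa [subword] using hj
  rw [uPref, List.take_add_one, List.getElem?_eq_getElem hj', Option.toList_some,
    listProd_append_singleton]
  simp [uPref, subword]

theorem uPref_length_eq_id (h : listProd (subword n S) = id) : uPref n S (n * (n - 1)) = id := by
  rw [uPref, List.take_of_length_le (by simp [subword]), h]

end Subword

section Token

variable {n : ℕ} {S : Finset ℕ}

theorem letterAt_of_mem_window (hn : n ≠ 1) {j : ℕ} {p : ℤ} (hp : j ≤ p)
    (hp' : p < j + n) : letterAt n S j p =
      if j ∉ S ∧ p = j then (j : ℤ) + 1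
      else if j ∉ S ∧ p = j + 1 then (j : ℤ)
      else p := by
  by_cases hS : j ∈ S
  · simp [letterAt, hS]
  · obtain rfl | rfl | hp₂ : p = j ∨ p = j + 1 ∨ j + 2 ≤ p := by omega
    · simp [letterAt, hS, simpleRefl_self]
    · simp [letterAt, hS, simpleRefl_add_one hn]
    · rw [if_neg (by omega), if_neg (by omega)]
      simp [letterAt, hS, simpleRefl_of_add_two_le hp₂ hp']

def tokenPos (n : ℕ) (S : Finset ℕ) (r : ℤ) : ℕ → ℤ
  | 0 => r
  | j + 1 =>
    if letterAt n S j (tokenPos n S r j) = j then j + n else letterAt n S j (tokenPos n S r j)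

def startVisits (n : ℕ) (S : Finset ℕ) (r : ℤ) (j : ℕ) : ℕ :=
  Nat.count (fun i => tokenPos n S r i = i) j

def wraps (n : ℕ) (S : Finset ℕ) (r : ℤ) (j : ℕ) : ℕ :=
  Nat.count (fun i => letterAt n S i (tokenPos n S r i) = i) j

theorem tokenPos_spec (hn : 2 ≤ n) {r : ℤ} (hr : 0 ≤ r) (hr' : r < n) (j : ℕ) :
    j ≤ tokenPos n S r j ∧ tokenPos n S r j < j + n ∧
      tokenPos n S r j = r + startVisits n S r j + (n - 1) * wraps n S r j := by
  induction j with
  | zero => simp [tokenPos, startVisits, wraps, hr, hr']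
  | succ j ih =>
    obtain ⟨h₁, h₂, h₃⟩ := ih
    simp only [tokenPos, startVisits, wraps, Nat.count_succ]
    rw [letterAt_of_mem_window (by omega) h₁ h₂]
    simp only [startVisits, wraps] at h₃
    -- the token wraps iff it sits at `j` before a skip or at `j + 1` before a take
    split_ifs <;> push_cast <;>
      first | omega | exact ⟨by omega, by omega, by linarith⟩

theorem uPref_tokenPos (hn : n ≠ 1) (r : ℤ) {j : ℕ} (hj : j ≤ n * (n - 1)) :
    uPref n S j (tokenPos n S r j) = r + n * wraps n S r j := by
  induction j with
  | zero => simp [tokenPos, wraps, uPref, listProd]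
  | succ j ih =>
    have hback : uPref n S (j + 1) (letterAt n S j (tokenPos n S r j)) =
        uPref n S j (tokenPos n S r j) := by
      rw [uPref_succ (by omega), comp_apply, letterAt_involutive hn]
    simp only [tokenPos, wraps, Nat.count_succ]
    split_ifs with h
    · rw [← h, uPref_add_self, hback, ih (by omega)]
      push_cast [wraps]
      ring
    · rw [hback, ih (by omega)]
      simp [wraps]

theorem tokenPos_eq_of_modEq (hn : 2 ≤ n) {r : ℤ} (hr : 0 ≤ r) (hr' : r < n) {j : ℕ}
    (hj : j ≤ n * (n - 1)) {p : ℤ} (hp : j ≤ p) (hp' : p < j + n)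
    (h : uPref n S j p ≡ r [ZMOD n]) : tokenPos n S r j = p := by
  obtain ⟨h₁, h₂, -⟩ := tokenPos_spec (S := S) hn hr hr' j
  have htoken : uPref n S j (tokenPos n S r j) ≡ r [ZMOD n] := by
    rw [uPref_tokenPos (by omega) r hj]
    exact Int.modEq_add_fac_self
  exact (Int.modEq_of_map_modEq (uPref_injective (by omega) j) (uPref_add_self j)
    (htoken.trans h.symm)).eq_of_lt_add h₁ h₂ hp hp'

theorem exists_tokenPos_eq (hn : 2 ≤ n) {j : ℕ} (hj : j ≤ n * (n - 1)) {p : ℤ}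
    (hp : j ≤ p) (hp' : p < j + n) :
    ∃ r : ℤ, 0 ≤ r ∧ r < n ∧ tokenPos n S r j = p ∧
      uPref n S j p = r + n * wraps n S r j ∧
      p = r + startVisits n S r j + (n - 1) * wraps n S r j := by
  have hn₀ : (0 : ℤ) < n := by omega
  obtain ⟨r, hr, hr', hmod⟩ : ∃ r : ℤ, 0 ≤ r ∧ r < n ∧ uPref n S j p ≡ r [ZMOD n] :=
    ⟨_, Int.emod_nonneg _ hn₀.ne', Int.emod_lt_of_pos _ hn₀, (Int.mod_modEq _ _).symm⟩
  have hpos := tokenPos_eq_of_modEq hn hr hr' hj hp hp' hmod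
  obtain ⟨-, -, hz⟩ := tokenPos_spec (S := S) hn hr hr' j
  refine ⟨r, hr, hr', hpos, ?_, hpos ▸ hz⟩
  rw [← uPref_tokenPos (by omega) r hj, hpos]

theorem startVisits_length_eq (hn : 2 ≤ n) (h : listProd (subword n S) = id) {r : ℤ}
    (hr : 0 ≤ r) (hr' : r < n) : startVisits n S r (n * (n - 1)) = n - 1 := by
  obtain ⟨h₁, h₂, h₃⟩ := tokenPos_spec (S := S) hn hr hr' (n * (n - 1))
  have hv := uPref_tokenPos (n := n) (S := S) (by omega) r le_rfl
  rw [uPref_length_eq_id h, id] at hv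
  have hN : ((n * (n - 1) : ℕ) : ℤ) = n * (n - 1) := by
    push_cast [Nat.cast_sub (by omega : 1 ≤ n)]
    ring
  rw [hN] at h₁ h₂
  have hw₁ : (wraps n S r (n * (n - 1)) : ℤ) ≤ n - 1 := by nlinarith
  have hw₂ : (n : ℤ) - 1 ≤ wraps n S r (n * (n - 1)) := by nlinarith
  have hzw : (startVisits n S r (n * (n - 1)) : ℤ) = wraps n S r (n * (n - 1)) := by linarith
  omega

theorem startVisits_le (hn : 2 ≤ n) (h : listProd (subword n S) = id) {r : ℤ}
    (hr : 0 ≤ r) (hr' : r < n) {j : ℕ} (hj : j ≤ n * (n - 1)) :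
    startVisits n S r j ≤ n - 1 :=
  (Nat.count_monotone _ hj).trans_eq (startVisits_length_eq hn h hr hr')

theorem startVisits_lt_of_tokenPos_eq (hn : 2 ≤ n) (h : listProd (subword n S) = id) {r : ℤ}
    (hr : 0 ≤ r) (hr' : r < n) {j : ℕ} (hj : j < n * (n - 1)) (hp : tokenPos n S r j = j) :
    startVisits n S r j < n - 1 := by
  have := startVisits_le hn h hr hr' hj
  rw [startVisits, Nat.count_succ, if_pos hp] at this
  exact this

theorem one_le_startVisits_zero {j : ℕ} (hj : j ≠ 0) : 1 ≤ startVisits n S 0 j :=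
  (by simp [startVisits, Nat.count_succ, tokenPos] : 1 ≤ startVisits n S 0 1).trans
    (Nat.count_monotone _ (Nat.one_le_iff_ne_zero.2 hj))

end Token

theorem abs_sub_le_of_counts {n j r r' z z' w w' : ℤ}
    (hr : 0 ≤ r) (hr' : r < n) (hs : 0 ≤ r') (hs' : r' < n) (hrr : r ≠ r')
    (hz : 0 ≤ z) (hz' : z < n - 1) (ht : 0 ≤ z') (ht' : z' < n) (h0 : r' = 0 → 1 ≤ z')
    (hj : j = r + z + (n - 1) * w) (hj' : j + 1 = r' + z' + (n - 1) * w') :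
    |r' + n * w' - (r + n * w)| ≤ n - 1 := by
  have key : (n - 1) * (w' - w) = 1 + r - r' + z - z' := by linear_combination hj - hj'
  have hd₁ : -1 ≤ w' - w := by nlinarith
  have hd₂ : w' - w ≤ 2 := by nlinarith
  obtain ⟨d, rfl⟩ : ∃ d, w' = w + d := ⟨w' - w, by ring⟩
  rw [show r' + n * (w + d) - (r + n * w) = r' - r + n * d by ring, abs_le]
  simp only [add_sub_cancel_left] at hd₁ hd₂ key
  interval_cases d <;> omega

theorem stmt10_general (n : ℕ) (hn : 2 ≤ n) (S : Finset ℕ)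
    (h : listProd (subword n S) = id) :
    ∀ j : ℕ, j < n * (n - 1) →
      |uPref n S j ((j : ℤ) + 1) - uPref n S j (j : ℤ)| ≤ (n : ℤ) - 1 := by
  intro j hj
  obtain ⟨r, hr, hr', hp, hv, hz⟩ :=
    exists_tokenPos_eq (S := S) (p := j) hn hj.le le_rfl (by omega)
  obtain ⟨r', hs, hs', hp', hv', hz'⟩ :=
    exists_tokenPos_eq (S := S) (p := j + 1) hn hj.le (by omega) (by omega)
  rw [hv, hv']
  refine abs_sub_le_of_counts hr hr' hs hs' ?_ (by positivity) ?_ (by positivity) ?_ ?_ hz hz'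
  · rintro rfl
    omega
  · have := startVisits_lt_of_tokenPos_eq hn h hr hr' hj hp
    omega
  · have := startVisits_le hn h hs hs' hj.le
    omega
  · rintro rfl
    have hj₀ : j ≠ 0 := by
      rintro rfl
      simp [tokenPos] at hp'
    exact_mod_cast one_le_startVisits_zero hj₀

/-- For an `e`-subword `u` of `λ̂ₙ`, for every `j = 0, …, N-1` one has
`|u_{(j)}(j+1) - u_{(j)}(j)| ≤ n - 1`; i.e. every reflection of `inv(u)` can be
written as `((a,b))` with `|b - a| ≤ n - 1`. -/
theorem stmt10 (n : ℕ) (hn : 2 ≤ n) (S : Finset ℕ)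
    (hS : S ⊆ Finset.range (n * (n - 1)))
    (h : listProd (subword n S) = id) :
    ∀ j : ℕ, j < n * (n - 1) →
      |uPref n S j ((j : ℤ) + 1) - uPref n S j (j : ℤ)| ≤ (n : ℤ) - 1 :=
  stmt10_general n hn S h
end

section
/- (Cayley's formula) For every integer n ≥ 2, the number of simple graphs on the vertex set {1, …, n} that are trees (connected and acyclic) equals n^{n−2}. -/
/-!
Prüfer's bijection. Deleting the smallest leaf of a tree on `m + 2` linearly ordered vertices
and recording its neighbour, `m` times, leaves a single edge and produces a word of length `m`.
The letters of this word are exactly the non-leaves, so the word determines the leaf removed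
first, and by induction the whole tree. Conversely, a word `c :: w` is the code of the tree
obtained by taking a tree on the remaining vertices with code `w` and attaching to `c`, as a
leaf, the smallest vertex not occurring in `c :: w`. Hence trees on `n` vertices are counted by
the words of length `n - 2`.
-/

open Finset

theorem Fintype.card_compl_singleton {V : Type*} [Fintype V] [DecidableEq V] (ℓ : V) :
    Fintype.card ({ℓ}ᶜ : Set V) = Fintype.card V - 1 := by
  rw [Fintype.card_compl_set, Set.card_singleton]

namespace SimpleGraph

variable {V : Type*}

def IsLeaf (G : SimpleGraph V) (v : V) : Prop := ∃! w, G.Adj v w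

open Classical in
noncomputable def someNeighbor (G : SimpleGraph V) (v : V) : V :=
  if h : ∃ w, G.Adj v w then h.choose else v

open Classical in
noncomputable def leaves [Fintype V] (G : SimpleGraph V) : Finset V := {v | G.IsLeaf v}

def addLeaf (ℓ c : V) (H : SimpleGraph ({ℓ}ᶜ : Set V)) : SimpleGraph V :=
  H.map (Function.Embedding.subtype _) ⊔ edge ℓ c

variable {G : SimpleGraph V} {ℓ v : V}

lemma mem_leaves [Fintype V] : v ∈ G.leaves ↔ G.IsLeaf v := by
  simp [leaves]

lemma IsLeaf.adj_iff (hℓ : G.IsLeaf ℓ) {x : V} : G.Adj ℓ x ↔ x = G.someNeighbor ℓ := by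
  obtain ⟨w, hw, huniq⟩ := hℓ
  have hex : ∃ w, G.Adj ℓ w := ⟨w, hw⟩
  have hnbr : G.Adj ℓ (G.someNeighbor ℓ) := by
    rw [someNeighbor, dif_pos hex]
    exact hex.choose_spec
  exact ⟨fun hx => (huniq x hx).trans (huniq _ hnbr).symm, fun hx => hx ▸ hnbr⟩

lemma IsLeaf.adj_someNeighbor (hℓ : G.IsLeaf ℓ) : G.Adj ℓ (G.someNeighbor ℓ) :=
  hℓ.adj_iff.2 rfl

lemma Connected.isLeaf_of_card_eq_two (hG : G.Connected) (hV : Nat.card V = 2) (v : V) :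
    G.IsLeaf v := by
  obtain ⟨w, hw, huniq⟩ := (Nat.card_eq_two_iff' v).1 hV
  have := nontrivial_of_ne w v hw
  obtain ⟨u, hu⟩ := hG.preconnected.exists_adj_of_nontrivial v
  exact ⟨u, hu, fun y hy => (huniq y hy.ne').trans (huniq u hu.ne').symm⟩

lemma Connected.eq_top_of_card_eq_two (hG : G.Connected) (hV : Nat.card V = 2) : G = ⊤ := by
  ext a b
  obtain ⟨w, -, huniq⟩ := (Nat.card_eq_two_iff' a).1 hV
  obtain ⟨u, hu, -⟩ := hG.isLeaf_of_card_eq_two hV a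
  exact ⟨Adj.ne, fun hab => ((huniq b (Ne.symm hab)).trans (huniq u hu.ne').symm) ▸ hu⟩

lemma IsTree.exists_isLeaf [Finite V] [Nontrivial V] (hG : G.IsTree) : ∃ v, G.IsLeaf v := by
  have := Fintype.ofFinite V
  classical
  obtain ⟨v, hv⟩ := hG.exists_vert_degree_one_of_nontrivial
  exact ⟨v, degree_eq_one_iff_existsUnique_adj.1 hv⟩

lemma IsLeaf.not_mem_support_of_isCycle (hℓ : G.IsLeaf ℓ) {u : V} {p : G.Walk u u}
    (hp : p.IsCycle) : ℓ ∉ p.support := by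
  classical
  intro hmem
  set q := p.rotate ℓ hmem
  have hq : q.IsCycle := hp.rotate hmem
  -- a vertex on a cycle has two distinct neighbours on it
  apply hq.snd_ne_penultimate
  rw [hℓ.adj_iff.1 (q.adj_snd hq.not_nil), hℓ.adj_iff.1 (q.adj_penultimate hq.not_nil).symm]

lemma IsLeaf.isTree_iff (hℓ : G.IsLeaf ℓ) : G.IsTree ↔ (G.induce {ℓ}ᶜ).IsTree := by
  have hfin : (G.neighborSet ℓ).Finite := by
    convert Set.finite_singleton (G.someNeighbor ℓ)
    exact Set.ext fun _ => hℓ.adj_iff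
  have := hfin.fintype
  refine ⟨fun hG => ⟨hG.connected.induce_compl_singleton_of_degree_eq_one
    (degree_eq_one_iff_existsUnique_adj.2 hℓ), hG.isAcyclic.induce _⟩, fun hH => ⟨?_, ?_⟩⟩
  · set c := G.someNeighbor ℓ
    have hc : c ≠ ℓ := hℓ.adj_someNeighbor.ne'
    have hreach : ∀ v, G.Reachable v c := by
      intro v
      by_cases hv : v = ℓ
      · exact hv ▸ hℓ.adj_someNeighbor.reachable
      · exact (hH.connected.preconnected ⟨v, hv⟩ ⟨c, hc⟩).map (Embedding.induce _).toHom
    exact (connected_iff _).2 ⟨fun u v => (hreach u).trans (hreach v).symm, ⟨c⟩⟩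
  · intro u p hp
    have hsupp : ∀ x ∈ p.support, x ∈ ({ℓ}ᶜ : Set V) := fun x hx hxℓ =>
      hℓ.not_mem_support_of_isCycle hp (hxℓ ▸ hx)
    apply hH.isAcyclic (p.induce _ hsupp)
    rwa [← Walk.isCycle_map_iff_of_injective (f := (Embedding.induce (G := G) _).toHom)
      (Embedding.induce (G := G) _).injective, Walk.map_induce]

lemma IsTree.isLeaf_iff_isLeaf_induce [Fintype V] [DecidableEq V] (hG : G.IsTree)
    (h3 : 3 ≤ Fintype.card V) (hℓ : G.IsLeaf ℓ) (hv : v ≠ ℓ) :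
    G.IsLeaf v ↔ v ≠ G.someNeighbor ℓ ∧ (G.induce {ℓ}ᶜ).IsLeaf ⟨v, hv⟩ := by
  by_cases hvc : v = G.someNeighbor ℓ
  · subst hvc
    have : Nontrivial ({ℓ}ᶜ : Set V) := by
      rw [← Fintype.one_lt_card_iff_nontrivial, Fintype.card_compl_singleton]
      omega
    obtain ⟨⟨w, hwℓ⟩, hw⟩ :=
      (hℓ.isTree_iff.1 hG).preconnected.exists_adj_of_nontrivial ⟨_, hv⟩
    simp only [ne_eq, not_true_eq_false, false_and, iff_false]
    rintro ⟨y, -, huniq⟩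
    exact hwℓ ((huniq w hw).trans (huniq ℓ hℓ.adj_someNeighbor.symm).symm)
  · have hnotadj : ∀ {x}, G.Adj v x → x ≠ ℓ := by
      rintro x hx rfl
      exact hvc (hℓ.adj_iff.1 hx.symm)
    simp only [ne_eq, hvc, not_false_eq_true, true_and]
    constructor
    · rintro ⟨w, hw, huniq⟩
      exact ⟨⟨w, hnotadj hw⟩, hw, fun y hy => Subtype.ext (huniq y hy)⟩
    · rintro ⟨w, hw, huniq⟩
      exact ⟨w, hw, fun y hy => congrArg Subtype.val (huniq ⟨y, hnotadj hy⟩ hy)⟩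

section AddLeaf

variable {c : V} {H : SimpleGraph ({ℓ}ᶜ : Set V)}

lemma addLeaf_adj_self (hc : c ≠ ℓ) {x : V} : (addLeaf ℓ c H).Adj ℓ x ↔ x = c := by
  rw [addLeaf, sup_adj, map_adj, edge_adj]
  constructor
  · rintro (⟨⟨u, hu⟩, _, -, h, -⟩ | ⟨⟨-, rfl⟩ | ⟨rfl, -⟩, -⟩)
    · exact absurd h hu
    · rfl
    · exact absurd rfl hc
  · rintro rfl
    exact Or.inr ⟨Or.inl ⟨rfl, rfl⟩, hc.symm⟩

lemma addLeaf_adj_of_ne {a b : V} (ha : a ≠ ℓ) (hb : b ≠ ℓ) :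
    (addLeaf ℓ c H).Adj a b ↔ H.Adj ⟨a, ha⟩ ⟨b, hb⟩ := by
  rw [addLeaf, sup_adj, map_adj, edge_adj]
  constructor
  · rintro (⟨u, v, huv, rfl, rfl⟩ | ⟨⟨rfl, -⟩ | ⟨-, rfl⟩, -⟩)
    · exact huv
    · exact absurd rfl ha
    · exact absurd rfl hb
  · exact fun h => Or.inl ⟨_, _, h, rfl, rfl⟩

lemma isLeaf_addLeaf (hc : c ≠ ℓ) : (addLeaf ℓ c H).IsLeaf ℓ :=
  ⟨c, (addLeaf_adj_self hc).2 rfl, fun _ => (addLeaf_adj_self hc).1⟩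

lemma someNeighbor_addLeaf (hc : c ≠ ℓ) : (addLeaf ℓ c H).someNeighbor ℓ = c :=
  ((isLeaf_addLeaf hc).adj_iff.1 ((addLeaf_adj_self hc).2 rfl)).symm

lemma induce_addLeaf : (addLeaf ℓ c H).induce {ℓ}ᶜ = H := by
  ext ⟨a, ha⟩ ⟨b, hb⟩
  exact addLeaf_adj_of_ne ha hb

lemma isTree_addLeaf (hc : c ≠ ℓ) (hH : H.IsTree) : (addLeaf ℓ c H).IsTree :=
  (isLeaf_addLeaf hc).isTree_iff.2 (induce_addLeaf ▸ hH)

lemma IsLeaf.addLeaf_induce (hℓ : G.IsLeaf ℓ) :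
    addLeaf ℓ (G.someNeighbor ℓ) (G.induce {ℓ}ᶜ) = G := by
  have hc := hℓ.adj_someNeighbor.ne'
  ext a b
  by_cases ha : a = ℓ
  · subst ha
    rw [addLeaf_adj_self hc, hℓ.adj_iff]
  by_cases hb : b = ℓ
  · subst hb
    rw [adj_comm, addLeaf_adj_self hc, adj_comm, hℓ.adj_iff]
  exact addLeaf_adj_of_ne ha hb

end AddLeaf

section Prufer

universe u

variable {V : Type u} [Fintype V] [LinearOrder V] {G : SimpleGraph V}

noncomputable def pruferCode :
    (m : ℕ) → {V : Type u} → [Fintype V] → [LinearOrder V] → SimpleGraph V → List V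
  | 0, _, _, _, _ => []
  | m + 1, V, _, _, G =>
    match G.leaves.min with
    | none => []
    | some ℓ => G.someNeighbor ℓ :: (pruferCode m (G.induce ({ℓ}ᶜ : Set V))).map (↑)

lemma pruferCode_succ {m : ℕ} {ℓ : V} (h : G.leaves.min = ℓ) :
    pruferCode (m + 1) G = G.someNeighbor ℓ :: (pruferCode m (G.induce {ℓ}ᶜ)).map (↑) := by
  rw [pruferCode, h]

lemma IsTree.exists_leaves_min_eq [Nontrivial V] (hG : G.IsTree) :
    ∃ ℓ : V, G.leaves.min = ℓ ∧ G.IsLeaf ℓ := by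
  obtain ⟨v, hv⟩ := hG.exists_isLeaf
  obtain ⟨ℓ, hℓ⟩ := Finset.min_of_nonempty ⟨v, mem_leaves.2 hv⟩
  exact ⟨ℓ, hℓ, mem_leaves.1 (Finset.mem_of_min hℓ)⟩

lemma IsTree.mem_someNeighbor_cons_iff (hG : G.IsTree) (h3 : 3 ≤ Fintype.card V) {ℓ : V}
    (hℓ : G.IsLeaf ℓ) {l : List ({ℓ}ᶜ : Set V)}
    (hl : ∀ w, w ∈ l ↔ ¬(G.induce {ℓ}ᶜ).IsLeaf w) (v : V) :
    v ∈ G.someNeighbor ℓ :: l.map (↑) ↔ ¬G.IsLeaf v := by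
  by_cases hv : v = ℓ
  · subst hv
    simp only [List.mem_cons, List.mem_map, hℓ, not_true_eq_false, iff_false, not_or]
    exact ⟨hℓ.adj_someNeighbor.ne, fun ⟨⟨w, hw⟩, _, hwv⟩ => hw hwv⟩
  · have hmem : v ∈ l.map (↑) ↔ ⟨v, hv⟩ ∈ l := by
      rw [List.mem_map]
      exact ⟨fun ⟨w, hw, hwv⟩ => (Subtype.ext hwv : w = ⟨v, hv⟩) ▸ hw, fun h => ⟨_, h, rfl⟩⟩
    rw [hG.isLeaf_iff_isLeaf_induce h3 hℓ hv, List.mem_cons, hmem, hl]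
    tauto

theorem IsTree.length_pruferCode {m : ℕ} (hG : G.IsTree) (hV : Fintype.card V = m + 2) :
    (pruferCode m G).length = m := by
  induction m generalizing V with
  | zero => rfl
  | succ m ih =>
    have : Nontrivial V := Fintype.one_lt_card_iff_nontrivial.1 (by omega)
    obtain ⟨ℓ, hmin, hℓ⟩ := hG.exists_leaves_min_eq
    rw [pruferCode_succ hmin, List.length_cons, List.length_map,
      ih (hℓ.isTree_iff.1 hG) (by rw [Fintype.card_compl_singleton]; omega)]

theorem IsTree.mem_pruferCode_iff {m : ℕ} (hG : G.IsTree) (hV : Fintype.card V = m + 2)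
    (v : V) : v ∈ pruferCode m G ↔ ¬G.IsLeaf v := by
  induction m generalizing V with
  | zero =>
    rw [pruferCode, List.mem_nil_iff, false_iff, not_not]
    exact hG.connected.isLeaf_of_card_eq_two (by rwa [Nat.card_eq_fintype_card]) v
  | succ m ih =>
    have : Nontrivial V := Fintype.one_lt_card_iff_nontrivial.1 (by omega)
    obtain ⟨ℓ, hmin, hℓ⟩ := hG.exists_leaves_min_eq
    rw [pruferCode_succ hmin]
    exact hG.mem_someNeighbor_cons_iff (by omega) hℓ
      (ih (hℓ.isTree_iff.1 hG) (by rw [Fintype.card_compl_singleton]; omega)) v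

theorem IsTree.eq_of_pruferCode_eq {G' : SimpleGraph V} (hG : G.IsTree) {m : ℕ}
    (hV : Fintype.card V = m + 2) (hG' : G'.IsTree) (h : pruferCode m G = pruferCode m G') :
    G = G' := by
  induction m generalizing V with
  | zero =>
    have hV : Nat.card V = 2 := by rwa [Nat.card_eq_fintype_card]
    rw [hG.connected.eq_top_of_card_eq_two hV, hG'.connected.eq_top_of_card_eq_two hV]
  | succ m ih =>
    have : Nontrivial V := Fintype.one_lt_card_iff_nontrivial.1 (by omega)
    have hleaves : G.leaves = G'.leaves := by
      ext v
      rw [mem_leaves, mem_leaves, ← not_iff_not, ← hG.mem_pruferCode_iff hV,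
        ← hG'.mem_pruferCode_iff hV, h]
    obtain ⟨ℓ, hmin, hℓ⟩ := hG.exists_leaves_min_eq
    have hmin' : G'.leaves.min = ℓ := hleaves ▸ hmin
    have hℓ' : G'.IsLeaf ℓ := mem_leaves.1 (hleaves ▸ Finset.mem_of_min hmin)
    rw [pruferCode_succ hmin, pruferCode_succ hmin', List.cons_eq_cons] at h
    have hcard : Fintype.card ({ℓ}ᶜ : Set V) = m + 2 := by rw [Fintype.card_compl_singleton]; omega
    rw [← hℓ.addLeaf_induce, ← hℓ'.addLeaf_induce, h.1,
      ih (hℓ.isTree_iff.1 hG) hcard (hℓ'.isTree_iff.1 hG')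
        (List.map_injective_iff.2 Subtype.val_injective h.2)]

theorem pruferCode_addLeaf {ℓ c : V} {H : SimpleGraph ({ℓ}ᶜ : Set V)} (hH : H.IsTree)
    {m : ℕ} (hV : Fintype.card V = m + 3) (hc : c ≠ ℓ)
    (hℓ : (univ \ (c :: (pruferCode m H).map (↑)).toFinset).min = ℓ) :
    pruferCode (m + 1) (addLeaf ℓ c H) = c :: (pruferCode m H).map (↑) := by
  have hcard : Fintype.card ({ℓ}ᶜ : Set V) = m + 2 := by rw [Fintype.card_compl_singleton]; omega
  have hleaves : (addLeaf ℓ c H).leaves = univ \ (c :: (pruferCode m H).map (↑)).toFinset := by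
    ext v
    have := (isTree_addLeaf hc hH).mem_someNeighbor_cons_iff (by omega) (isLeaf_addLeaf hc)
      (l := pruferCode m H) (by rw [induce_addLeaf]; exact hH.mem_pruferCode_iff hcard) v
    rw [someNeighbor_addLeaf hc] at this
    rw [mem_leaves, mem_sdiff, List.mem_toFinset, this, not_not]
    exact (and_iff_right (mem_univ v)).symm
  rw [pruferCode_succ (hleaves ▸ hℓ), someNeighbor_addLeaf hc, induce_addLeaf]

theorem exists_isTree_pruferCode_eq {m : ℕ} (hV : Fintype.card V = m + 2) (l : List V)
    (hl : l.length = m) : ∃ G : SimpleGraph V, G.IsTree ∧ pruferCode m G = l := by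
  induction m generalizing V with
  | zero =>
    have : Nonempty V := Fintype.card_pos_iff.1 (by omega)
    obtain ⟨G, -, hG⟩ := (connected_top (V := V)).exists_isTree_le
    exact ⟨G, hG, by rw [pruferCode, List.length_eq_zero_iff.1 hl]⟩
  | succ m ih =>
    obtain ⟨c, l', rfl⟩ := List.exists_cons_of_length_eq_add_one hl
    set S := univ \ (c :: l').toFinset
    have hS : S.Nonempty := Finset.sdiff_nonempty.2 fun hsub => by
      have := (Finset.card_le_card hsub).trans (c :: l').toFinset_card_le
      simp only [card_univ, hV, hl] at this
      omega
    set ℓ := S.min' hS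
    have hℓ : ℓ ∉ c :: l' := by
      have := S.min'_mem hS
      rw [Finset.mem_sdiff, List.mem_toFinset] at this
      exact this.2
    have hc : c ≠ ℓ := fun h => hℓ (h ▸ List.mem_cons_self)
    obtain ⟨l'', hl''⟩ : ∃ l'' : List ({ℓ}ᶜ : Set V), l''.map (↑) = l' :=
      CanLift.prf l' fun x hx (hxℓ : x = ℓ) => hℓ (List.mem_cons_of_mem _ (hxℓ ▸ hx))
    have hcard : Fintype.card ({ℓ}ᶜ : Set V) = m + 2 := by rw [Fintype.card_compl_singleton]; omega
    obtain ⟨H, hH, hcode⟩ := ih hcard l'' (by simpa [← hl''] using hl)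
    refine ⟨addLeaf ℓ c H, isTree_addLeaf hc hH, ?_⟩
    rw [pruferCode_addLeaf hH (by omega) hc (by rw [hcode, hl'', Finset.coe_min']), hcode, hl'']

theorem card_isTree_of_card_eq {m : ℕ} (hV : Fintype.card V = m + 2) :
    Nat.card {G : SimpleGraph V // G.IsTree} = (m + 2) ^ m := by
  let code (G : {G : SimpleGraph V // G.IsTree}) : List.Vector V m :=
    ⟨pruferCode m G.1, G.2.length_pruferCode hV⟩
  have hcode : code.Bijective := by
    refine ⟨fun G G' h => Subtype.ext (G.2.eq_of_pruferCode_eq hV G'.2 (congrArg Subtype.val h)),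
      fun l => ?_⟩
    obtain ⟨G, hG, hl⟩ := exists_isTree_pruferCode_eq hV l.1 l.2
    exact ⟨⟨G, hG⟩, Subtype.ext hl⟩
  rw [Nat.card_congr (Equiv.ofBijective code hcode), Nat.card_eq_fintype_card, card_vector, hV]

end Prufer

theorem card_isTree {V : Type*} [Fintype V] (hV : 2 ≤ Fintype.card V) :
    Nat.card {G : SimpleGraph V // G.IsTree} = Fintype.card V ^ (Fintype.card V - 2) := by
  let _ : LinearOrder V := LinearOrder.lift' _ (Fintype.equivFin V).injective
  obtain ⟨m, hm⟩ := Nat.exists_eq_add_of_le' hV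
  rw [card_isTree_of_card_eq hm, hm, Nat.add_sub_cancel]

end SimpleGraph

/-- Cayley's formula: the number of simple graphs on the vertex set
`{1, …, n}` that are trees (connected and acyclic) equals `n^(n-2)`. -/
theorem stmt19 (n : ℕ) (hn : 2 ≤ n) :
    Nat.card {G : SimpleGraph (Fin n) // G.Connected ∧ G.IsAcyclic} = n ^ (n - 2) := by
  simp_rw [← SimpleGraph.isTree_iff]
  simpa using SimpleGraph.card_isTree (V := Fin n) (by simpa using hn)
end
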